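/- Let X be a topological space, x₀ ∈ X, and let g and s be loops at x₀ (continuous paths from x₀ to x₀). Then there exists a continuous map H : [0,1] × [0,1] → X satisfying H(t,0) = g(t) and H(t,1) = g(t) for all t ∈ [0,1], and H(0,u) = s(u) and H(1,u) = s(u) for all u ∈ [0,1] (that is, a free self-homotopy of the loop g whose basepoint traces out the loop s), if and only if the concatenated loop s·g is path-homotopic (homotopic rel endpoints) to the concatenated loop g·s, i.e. the classes of s and g commute in the fundamental group π₁(X, x₀). -/

import Mathlib

/-!
Let `Φ := unitInterval.squareSweep : I × I → I × I` be the straight-line homotopy from the route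
`(0,0) → (0,1) → (1,1)` along the left and top edges of the square to the route
`(0,0) → (1,0) → (1,1)` along its bottom and right edges. It is surjective and injective except on
the ends `τ = 0` and `τ = 1`, which it collapses to the corners; as a map from a compact space to a
Hausdorff one it is therefore a quotient map. So `H ↦ H ∘ Φ` turns a map of the square with edges
`bot, right, left, top` into a path homotopy `left·top ≃ bot·right`, and conversely a path homotopy,
being constant on the ends, descends along `Φ` to such a map. Taking `bot = top = g` and
`left = right = s` gives the theorem.
-/

open unitInterval Topology

namespace unitInterval

theorem exists_two_mul_eq (u : I) : ∃ τ : I, 2 * (τ : ℝ) = u :=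
  ⟨⟨u / 2, by constructor <;> linarith [nonneg u, le_one u]⟩, by simp only; ring⟩

theorem exists_two_mul_sub_one_eq (t : I) : ∃ τ : I, 2 * (τ : ℝ) - 1 = t :=
  ⟨⟨(t + 1) / 2, by constructor <;> linarith [nonneg t, le_one t]⟩, by simp only; ring⟩

theorem exists_two_mul_eq_or_two_mul_sub_one_eq (τ : I) :
    (∃ u : I, 2 * (τ : ℝ) = u) ∨ ∃ t : I, 2 * (τ : ℝ) - 1 = t := by
  rcases le_total (τ : ℝ) (1 / 2) with h | h
  · exact .inl ⟨⟨2 * τ, by constructor <;> linarith [nonneg τ]⟩, rfl⟩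
  · exact .inr ⟨⟨2 * τ - 1, by constructor <;> linarith [le_one τ]⟩, rfl⟩

/-- `squareSweep (v, τ) = (τ + w, τ - w)` with `w = sweepOffset (v, τ)` moves, as `v` runs from
`0` to `1`, along the anti-diagonal `x + y = 2τ` from the left-top route to the bottom-right one. -/
noncomputable def sweepOffset (p : I × I) : ℝ := (2 * p.1 - 1) * min (p.2 : ℝ) (1 - p.2)

theorem abs_sweepOffset_le (p : I × I) : |sweepOffset p| ≤ min (p.2 : ℝ) (1 - p.2) := by
  rw [sweepOffset, abs_mul, abs_of_nonneg (le_min (nonneg p.2) (one_minus_nonneg p.2))]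
  exact mul_le_of_le_one_left (le_min (nonneg p.2) (one_minus_nonneg p.2))
    (abs_le.2 ⟨by linarith [nonneg p.1], by linarith [le_one p.1]⟩)

theorem add_mem_of_abs_le_min {τ w : ℝ} (hw : |w| ≤ min τ (1 - τ)) : τ + w ∈ I := by
  have := abs_le.1 hw
  have := min_le_left τ (1 - τ)
  have := min_le_right τ (1 - τ)
  constructor <;> linarith

noncomputable def squareSweep : C(I × I, I × I) where
  toFun p :=
    (⟨p.2 + sweepOffset p, add_mem_of_abs_le_min (abs_sweepOffset_le p)⟩,
      ⟨p.2 - sweepOffset p, sub_eq_add_neg (p.2 : ℝ) _ ▸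
        add_mem_of_abs_le_min ((abs_neg _).trans_le (abs_sweepOffset_le p))⟩)
  continuous_toFun := by
    unfold sweepOffset
    fun_prop

@[simp]
theorem coe_squareSweep_fst (p : I × I) : ((squareSweep p).1 : ℝ) = p.2 + sweepOffset p := rfl

@[simp]
theorem coe_squareSweep_snd (p : I × I) : ((squareSweep p).2 : ℝ) = p.2 - sweepOffset p := rfl

theorem squareSweep_source (v : I) : squareSweep (v, 0) = (0, 0) := by
  ext <;> simp [sweepOffset]

theorem squareSweep_target (v : I) : squareSweep (v, 1) = (1, 1) := by
  ext <;> simp [sweepOffset]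

theorem squareSweep_zero_of_two_mul_eq {τ u : I} (h : 2 * (τ : ℝ) = u) :
    squareSweep (0, τ) = (0, u) := by
  have hτ : min (τ : ℝ) (1 - τ) = τ := min_eq_left (by linarith [le_one u])
  ext <;> simp only [coe_squareSweep_fst, coe_squareSweep_snd, sweepOffset, hτ, Set.Icc.coe_zero]
    <;> linarith

theorem squareSweep_zero_of_two_mul_sub_one_eq {τ t : I} (h : 2 * (τ : ℝ) - 1 = t) :
    squareSweep (0, τ) = (t, 1) := by
  have hτ : min (τ : ℝ) (1 - τ) = 1 - τ := min_eq_right (by linarith [nonneg t])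
  ext <;> simp only [coe_squareSweep_fst, coe_squareSweep_snd, sweepOffset, hτ, Set.Icc.coe_zero,
    Set.Icc.coe_one] <;> linarith

theorem squareSweep_one_of_two_mul_eq {τ t : I} (h : 2 * (τ : ℝ) = t) :
    squareSweep (1, τ) = (t, 0) := by
  have hτ : min (τ : ℝ) (1 - τ) = τ := min_eq_left (by linarith [le_one t])
  ext <;> simp only [coe_squareSweep_fst, coe_squareSweep_snd, sweepOffset, hτ, Set.Icc.coe_zero,
    Set.Icc.coe_one] <;> linarith

theorem squareSweep_one_of_two_mul_sub_one_eq {τ u : I} (h : 2 * (τ : ℝ) - 1 = u) :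
    squareSweep (1, τ) = (1, u) := by
  have hτ : min (τ : ℝ) (1 - τ) = 1 - τ := min_eq_right (by linarith [nonneg u])
  ext <;> simp only [coe_squareSweep_fst, coe_squareSweep_snd, sweepOffset, hτ, Set.Icc.coe_one]
    <;> linarith

theorem squareSweep_eq_squareSweep {p q : I × I} (h : squareSweep p = squareSweep q) :
    p = q ∨ p.2 = 0 ∧ q.2 = 0 ∨ p.2 = 1 ∧ q.2 = 1 := by
  have h₁ := congrArg (fun r => ((r.1 : I) : ℝ)) h
  have h₂ := congrArg (fun r => ((r.2 : I) : ℝ)) h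
  simp only [coe_squareSweep_fst, coe_squareSweep_snd] at h₁ h₂
  have hτ : p.2 = q.2 := Subtype.ext (by linarith)
  have hoff : (2 * (p.1 : ℝ) - 1 - (2 * q.1 - 1)) * min (p.2 : ℝ) (1 - p.2) = 0 := by
    simp only [sweepOffset, hτ] at h₁ h₂ ⊢; linarith
  rcases mul_eq_zero.1 hoff with hv | hm
  · exact .inl (Prod.ext (Subtype.ext (by linarith)) hτ)
  · rcases min_choice (p.2 : ℝ) (1 - p.2) with h' | h' <;> rw [h'] at hm
    · have hp : p.2 = 0 := Set.Icc.coe_eq_zero.1 hm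
      exact .inr (.inl ⟨hp, hτ ▸ hp⟩)
    · have hp : p.2 = 1 := Set.Icc.coe_eq_one.1 (by linarith)
      exact .inr (.inr ⟨hp, hτ ▸ hp⟩)

theorem squareSweep_surjective : Function.Surjective squareSweep := by
  rintro ⟨x, y⟩
  set m := min (((x : ℝ) + y) / 2) (1 - ((x : ℝ) + y) / 2) with hm
  have hτ : ((x : ℝ) + y) / 2 ∈ I :=
    ⟨by linarith [nonneg x, nonneg y], by linarith [le_one x, le_one y]⟩
  have hxy : |(x : ℝ) - y| ≤ 2 * m := by
    have h₁ : |(x : ℝ) - y| ≤ x + y :=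
      abs_sub_le_iff.2 ⟨by linarith [nonneg y], by linarith [nonneg x]⟩
    have h₂ : |(x : ℝ) - y| ≤ 2 - (x + y) :=
      abs_sub_le_iff.2 ⟨by linarith [le_one x], by linarith [le_one y]⟩
    rcases min_choice (((x : ℝ) + y) / 2) (1 - ((x : ℝ) + y) / 2) with h | h <;>
      rw [hm, h] <;> linarith
  rcases (abs_nonneg _ |>.trans hxy).eq_or_lt with hm0 | hm0
  · refine ⟨(0, ⟨_, hτ⟩), ?_⟩
    have hoff : sweepOffset (0, ⟨_, hτ⟩) = 0 := by
      have hm' : m = 0 := by linarith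
      simp only [sweepOffset, ← hm, hm', mul_zero]
    have := abs_le.1 hxy
    ext <;> simp only [coe_squareSweep_fst, coe_squareSweep_snd, hoff] <;> linarith
  · have hm0 : m ≠ 0 := by linarith
    have hv : ((x : ℝ) - y + 2 * m) / (4 * m) ∈ I :=
      div_mem (by linarith [(abs_le.1 hxy).1]) (by linarith [abs_nonneg ((x : ℝ) - y)])
        (by linarith [(abs_le.1 hxy).2])
    refine ⟨(⟨_, hv⟩, ⟨_, hτ⟩), ?_⟩
    have hoff : sweepOffset (⟨_, hv⟩, ⟨_, hτ⟩) = ((x : ℝ) - y) / 2 := by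
      simp only [sweepOffset, ← hm]; field_simp; ring
    ext <;> simp only [coe_squareSweep_fst, coe_squareSweep_snd, hoff] <;> ring

theorem isQuotientMap_squareSweep : IsQuotientMap squareSweep :=
  .of_surjective_continuous squareSweep_surjective squareSweep.continuous

end unitInterval

namespace Path

variable {X : Type*} [TopologicalSpace X] {a b c d : X}

theorem trans_apply_of_two_mul_eq (p : Path a b) (q : Path b c) {τ u : I}
    (h : 2 * (τ : ℝ) = u) : (p.trans q) τ = p u := by
  rw [trans_apply, dif_pos (by linarith [le_one u])]
  exact congrArg p (Subtype.ext h)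

theorem trans_apply_of_two_mul_sub_one_eq (p : Path a b) (q : Path b c) {τ t : I}
    (h : 2 * (τ : ℝ) - 1 = t) : (p.trans q) τ = q t := by
  rw [trans_apply]
  split_ifs with hτ
  · have ht : t = 0 := Subtype.ext (by simp only [Set.Icc.coe_zero]; linarith [nonneg t])
    rw [ht, q.source]
    exact (congrArg p (Subtype.ext (by simp only [Set.Icc.coe_one]; linarith [nonneg t]))).trans
      p.target
  · exact congrArg q (Subtype.ext h)

theorem comp_squareSweep_zero_eq_trans_iff {H : I × I → X} (left : Path a c) (top : Path c d) :
    (∀ τ, H (squareSweep (0, τ)) = (left.trans top) τ) ↔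
      (∀ u, H (0, u) = left u) ∧ ∀ t, H (t, 1) = top t := by
  constructor
  · intro hH
    refine ⟨fun u => ?_, fun t => ?_⟩
    · obtain ⟨τ, hτ⟩ := exists_two_mul_eq u
      rw [← squareSweep_zero_of_two_mul_eq hτ, hH, trans_apply_of_two_mul_eq _ _ hτ]
    · obtain ⟨τ, hτ⟩ := exists_two_mul_sub_one_eq t
      rw [← squareSweep_zero_of_two_mul_sub_one_eq hτ, hH, trans_apply_of_two_mul_sub_one_eq _ _ hτ]
  · rintro ⟨hl, ht⟩ τ
    rcases exists_two_mul_eq_or_two_mul_sub_one_eq τ with ⟨u, hu⟩ | ⟨t, htτ⟩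
    · rw [squareSweep_zero_of_two_mul_eq hu, hl, trans_apply_of_two_mul_eq _ _ hu]
    · rw [squareSweep_zero_of_two_mul_sub_one_eq htτ, ht, trans_apply_of_two_mul_sub_one_eq _ _ htτ]

theorem comp_squareSweep_one_eq_trans_iff {H : I × I → X} (bot : Path a b) (right : Path b d) :
    (∀ τ, H (squareSweep (1, τ)) = (bot.trans right) τ) ↔
      (∀ t, H (t, 0) = bot t) ∧ ∀ u, H (1, u) = right u := by
  constructor
  · intro hH
    refine ⟨fun t => ?_, fun u => ?_⟩
    · obtain ⟨τ, hτ⟩ := exists_two_mul_eq t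
      rw [← squareSweep_one_of_two_mul_eq hτ, hH, trans_apply_of_two_mul_eq _ _ hτ]
    · obtain ⟨τ, hτ⟩ := exists_two_mul_sub_one_eq u
      rw [← squareSweep_one_of_two_mul_sub_one_eq hτ, hH, trans_apply_of_two_mul_sub_one_eq _ _ hτ]
  · rintro ⟨hb, hr⟩ τ
    rcases exists_two_mul_eq_or_two_mul_sub_one_eq τ with ⟨t, htτ⟩ | ⟨u, hu⟩
    · rw [squareSweep_one_of_two_mul_eq htτ, hb, trans_apply_of_two_mul_eq _ _ htτ]
    · rw [squareSweep_one_of_two_mul_sub_one_eq hu, hr, trans_apply_of_two_mul_sub_one_eq _ _ hu]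

theorem Homotopy.factorsThrough_squareSweep {p q : Path a b} (F : p.Homotopy q) :
    Function.FactorsThrough F squareSweep := by
  intro x y h
  rcases squareSweep_eq_squareSweep h with rfl | ⟨hx, hy⟩ | ⟨hx, hy⟩
  · rfl
  · rw [← x.eta, ← y.eta, hx, hy, F.source, F.source]
  · rw [← x.eta, ← y.eta, hx, hy, F.target, F.target]

theorem exists_square_iff_homotopic (bot : Path a b) (right : Path b d) (left : Path a c)
    (top : Path c d) :
    (∃ H : I × I → X, Continuous H ∧
      (∀ t : I, H (t, 0) = bot t) ∧
      (∀ t : I, H (t, 1) = top t) ∧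
      (∀ u : I, H (0, u) = left u) ∧
      (∀ u : I, H (1, u) = right u)) ↔
    (left.trans top).Homotopic (bot.trans right) := by
  constructor
  · rintro ⟨H, hH, hb, ht, hl, hr⟩
    refine ⟨{ toFun := H ∘ squareSweep
              continuous_toFun := hH.comp squareSweep.continuous
              map_zero_left := (comp_squareSweep_zero_eq_trans_iff left top).2 ⟨hl, ht⟩
              map_one_left := (comp_squareSweep_one_eq_trans_iff bot right).2 ⟨hb, hr⟩
              prop' := ?_ }⟩
    rintro v τ (rfl | rfl)
    · simp [squareSweep_source, hl]
    · simp [squareSweep_target, hr]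
  · rintro ⟨F⟩
    let H := isQuotientMap_squareSweep.lift F.toContinuousMap
      F.factorsThrough_squareSweep
    have hHF : ∀ p, H (squareSweep p) = F p :=
      DFunLike.congr_fun (isQuotientMap_squareSweep.lift_comp _ F.factorsThrough_squareSweep)
    obtain ⟨hl, ht⟩ := (comp_squareSweep_zero_eq_trans_iff left top).1 fun τ =>
      (hHF _).trans (F.apply_zero τ)
    obtain ⟨hb, hr⟩ := (comp_squareSweep_one_eq_trans_iff bot right).1 fun τ =>
      (hHF _).trans (F.apply_one τ)
    exact ⟨H, H.continuous, hb, ht, hl, hr⟩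

end Path

/-- For loops `g`, `s` at `x₀` in a topological space `X`, there exists a
free self-homotopy of `g` whose basepoint traces out `s` (a continuous
`H : I × I → X` with `H(t,0) = H(t,1) = g(t)` and `H(0,u) = H(1,u) = s(u)`) if and
only if `s·g` is path-homotopic (rel endpoints) to `g·s`, i.e. the classes of `s`
and `g` commute in `π₁(X, x₀)`. -/
theorem self_homotopy_of_loop_exists_iff_commute
    {X : Type*} [TopologicalSpace X] {x₀ : X} (g s : Path x₀ x₀) :
    (∃ H : I × I → X, Continuous H ∧
      (∀ t : I, H (t, 0) = g t) ∧
      (∀ t : I, H (t, 1) = g t) ∧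
      (∀ u : I, H (0, u) = s u) ∧
      (∀ u : I, H (1, u) = s u)) ↔
    (s.trans g).Homotopic (g.trans s) :=
  Path.exists_square_iff_homotopic g s s g
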